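/- Let p, q, q', l, l', r be integers with p and q relatively prime, 0 < q < p and 0 < q' < p, satisfying 1 − l·p = r·(p+q). Suppose the rational number (2p+q+1)/(p(p+q)) + 2 − (l+1)/(p+q) − (l'+1)/p is an integer, and that l'·q' ≡ 1 (mod p). Then q' = q. -/

import Mathlib

/-!
Multiplying the index by `p (p + q)` gives an integer congruent to `1 - l' q` modulo `p`, so
integrality forces `l' q ≡ 1 (mod p)`. Hence `q` and `q'` are both inverses of `l'` modulo `p`,
so they are congruent, and since both lie in `(0, p)` they are equal.
-/

namespace Int

theorem modEq_of_mul_modEq_one {n a b c : ℤ} (hb : a * b ≡ 1 [ZMOD n]) (hc : a * c ≡ 1 [ZMOD n]) :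
    b ≡ c [ZMOD n] :=
  calc b = b * 1 := (mul_one b).symm
    _ ≡ b * (a * c) [ZMOD n] := hc.symm.mul_left b
    _ = (a * b) * c := by ring
    _ ≡ 1 * c [ZMOD n] := hb.mul_right c
    _ = c := one_mul c

theorem ModEq.eq_of_nonneg_of_lt {n a b : ℤ} (h : a ≡ b [ZMOD n]) (ha : 0 ≤ a) (han : a < n)
    (hb : 0 ≤ b) (hbn : b < n) : a = b := by
  simpa only [Int.emod_eq_of_lt ha han, Int.emod_eq_of_lt hb hbn] using h.eq

end Int

theorem mul_modEq_one_of_index_eq_intCast {p q l l' k : ℤ} (hp : (p : ℚ) ≠ 0)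
    (hpq : (p : ℚ) + q ≠ 0)
    (h : ((2 * p + q + 1 : ℚ)) / ((p : ℚ) * ((p : ℚ) + (q : ℚ))) + 2
        - ((l : ℚ) + 1) / ((p : ℚ) + (q : ℚ)) - ((l' : ℚ) + 1) / (p : ℚ) = (k : ℚ)) :
    l' * q ≡ 1 [ZMOD p] := by
  have hcleared : 2 * p + q + 1 + 2 * p * (p + q) - (l + 1) * p - (l' + 1) * (p + q)
      = k * p * (p + q) := by
    have hQ : ((2 * p + q + 1 + 2 * p * (p + q) - (l + 1) * p - (l' + 1) * (p + q) : ℤ) : ℚ)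
        = ((k * p * (p + q) : ℤ) : ℚ) := by
      push_cast
      field_simp at h
      linear_combination h
    exact_mod_cast hQ
  rw [Int.modEq_iff_dvd]
  exact ⟨k * (p + q) - 2 * (p + q) + l + l', by linear_combination hcleared⟩

theorem stmt_2_general (p q q' l l' : ℤ)
    (hq0 : 0 < q) (hqp : q < p)
    (hq'0 : 0 < q') (hq'p : q' < p)
    (hint : ∃ k : ℤ,
      ((2 * p + q + 1 : ℚ)) / ((p : ℚ) * ((p : ℚ) + (q : ℚ))) + 2
        - ((l : ℚ) + 1) / ((p : ℚ) + (q : ℚ)) - ((l' : ℚ) + 1) / (p : ℚ) = (k : ℚ))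
    (hl'q' : l' * q' ≡ 1 [ZMOD p]) :
    q' = q := by
  obtain ⟨k, hk⟩ := hint
  have hp : (p : ℚ) ≠ 0 := by exact_mod_cast (hq0.trans hqp).ne'
  have hpq : (p : ℚ) + q ≠ 0 := by exact_mod_cast (show 0 < p + q by omega).ne'
  have hl'q : l' * q ≡ 1 [ZMOD p] := mul_modEq_one_of_index_eq_intCast hp hpq hk
  exact (Int.modEq_of_mul_modEq_one hl'q' hl'q).eq_of_nonneg_of_lt hq'0.le hq'p hq0.le hqp

/-- If `p, q` are coprime integers with `0 < q < p`, `0 < q' < p`,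
integers `l, l', r` satisfy `1 - l*p = r*(p+q)`, the rational number
`(2p+q+1)/(p(p+q)) + 2 - (l+1)/(p+q) - (l'+1)/p` is an integer, and
`l'*q' ≡ 1 (mod p)`, then `q' = q`. -/
theorem stmt_2 (p q q' l l' r : ℤ)
    (hcop : IsCoprime p q) (hq0 : 0 < q) (hqp : q < p)
    (hq'0 : 0 < q') (hq'p : q' < p)
    (hlr : 1 - l * p = r * (p + q))
    (hint : ∃ k : ℤ,
      ((2 * p + q + 1 : ℚ)) / ((p : ℚ) * ((p : ℚ) + (q : ℚ))) + 2
        - ((l : ℚ) + 1) / ((p : ℚ) + (q : ℚ)) - ((l' : ℚ) + 1) / (p : ℚ) = (k : ℚ))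
    (hl'q' : l' * q' ≡ 1 [ZMOD p]) :
    q' = q :=
  stmt_2_general p q q' l l' hq0 hqp hq'0 hq'p hint hl'q'
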